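/- If Γ is connected and there exists a non-balanced cycle in Γ, then ker(γ) = {0}. -/
import Mathlib


/-- The defining property of the incidence matrix of a multiquiver: every row has
at most one positive and at most one negative entry. -/
def CondM {V E : Type*} (γ : E → V → ℤ) : Prop :=
  ∀ e : E, (∀ v w : V, 0 < γ e v → 0 < γ e w → v = w) ∧
    (∀ v w : V, γ e v < 0 → γ e w < 0 → v = w)

/-- Two vertices are adjacent if they are distinct and some edge is incident to
both of them. -/
def MQAdj {V E : Type*} (γ : E → V → ℤ) (v w : V) : Prop :=
  v ≠ w ∧ ∃ e : E, γ e v ≠ 0 ∧ γ e w ≠ 0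

/-- The multiquiver is connected if any two vertices are related by the
reflexive–transitive closure of adjacency. -/
def MQConnected {V E : Type*} (γ : E → V → ℤ) : Prop :=
  ∀ v w : V, Relation.ReflTransGen (MQAdj γ) v w

/-- The kernel of the incidence matrix `γ`, as a `ℚ`-subspace of `V → ℚ`:
`{d | ∀ e, Σ_v γ e v · d v = 0}`. -/
def kerGamma {V E : Type*} [Fintype V] (γ : E → V → ℤ) : Submodule ℚ (V → ℚ) where
  carrier := {d | ∀ e : E, ∑ v : V, (γ e v : ℚ) * d v = 0}
  add_mem' := by
    intro a b ha hb e
    have : ∑ v : V, (γ e v : ℚ) * (a v + b v)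
        = (∑ v : V, (γ e v : ℚ) * a v) + ∑ v : V, (γ e v : ℚ) * b v := by
      rw [← Finset.sum_add_distrib]
      exact Finset.sum_congr rfl fun v _ => by ring
    simpa [this] using by rw [ha e, hb e, add_zero]
  zero_mem' := by intro e; simp
  smul_mem' := by
    intro c a ha e
    have : ∑ v : V, (γ e v : ℚ) * (c * a v) = c * ∑ v : V, (γ e v : ℚ) * a v := by
      rw [Finset.mul_sum]
      exact Finset.sum_congr rfl fun v _ => by ring
    simp only [Pi.smul_apply, smul_eq_mul]
    rw [this, ha e, mul_zero]

/-- A (not necessarily directed) cycle in the multiquiver with incidence matrix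
`γ`: `n ≥ 2` distinct vertices `v i` and distinct edges `e i`, with `e i`
incident to `v i` and `v (i+1)` (indices mod `n`). -/
structure MQCycle {V E : Type*} (γ : E → V → ℤ) where
  n : ℕ
  hn : 2 ≤ n
  v : ZMod n → V
  e : ZMod n → E
  hv : Function.Injective v
  he : Function.Injective e
  h1 : ∀ i, γ (e i) (v i) ≠ 0
  h2 : ∀ i, γ (e i) (v (i + 1)) ≠ 0

/-- A cycle is balanced if the product of the multiplicities at its sources
equals the product of the multiplicities at its targets. -/
def MQCycle.Balanced {V E : Type*} {γ : E → V → ℤ} (c : MQCycle γ) : Prop :=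
  haveI : NeZero c.n := ⟨by have := c.hn; omega⟩
  ∏ i : ZMod c.n, (γ (c.e i) (c.v i)).natAbs = ∏ i : ZMod c.n, (γ (c.e i) (c.v (i + 1))).natAbs

/-- The setoid on vertices whose classes are the connected components. -/
def mqSetoid {V E : Type*} (γ : E → V → ℤ) : Setoid V :=
  ⟨Relation.EqvGen (MQAdj γ), Relation.EqvGen.is_equivalence _⟩

/-- The edge `e` is a leaf at the component `C`: exactly one vertex is incident
to `e`, and that vertex lies in `C`. -/
def LeafAt {V E : Type*} (γ : E → V → ℤ) (C : Quotient (mqSetoid γ)) (e : E) : Prop :=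
  (∃! v : V, γ e v ≠ 0) ∧ ∀ v : V, γ e v ≠ 0 → Quotient.mk (mqSetoid γ) v = C

/-- A connected component is in equilibrium if no edge is a leaf at it and every
cycle all of whose vertices lie in it is balanced. -/
def InEquilibrium {V E : Type*} (γ : E → V → ℤ) (C : Quotient (mqSetoid γ)) : Prop :=
  (∀ e : E, ¬ LeafAt γ C e) ∧
    ∀ c : MQCycle γ, (∀ i, Quotient.mk (mqSetoid γ) (c.v i) = C) → c.Balanced

section Aux

variable {V E : Type*} [Fintype V] {γ : E → V → ℤ}

/-- The basic edge relation for a kernel element, in the directed case. -/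
lemma mq_key' (hM : CondM γ) {d : V → ℚ}
    (hd : ∀ e : E, ∑ u : V, (γ e u : ℚ) * d u = 0)
    {e : E} {v w : V} (hvpos : 0 < γ e v) (hwneg : γ e w < 0) :
    |(γ e v : ℚ)| * d v = |(γ e w : ℚ)| * d w := by
  classical
  have hvw : v ≠ w := by rintro rfl; omega
  have hz : ∀ u, u ≠ v → u ≠ w → γ e u = 0 := by
    intro u huv huw
    by_contra h
    rcases lt_or_gt_of_ne h with h' | h'
    · exact huw ((hM e).2 u w h' hwneg)
    · exact huv ((hM e).1 u v h' hvpos)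
  have hsum : (γ e v : ℚ) * d v + (γ e w : ℚ) * d w = 0 := by
    have h0 := hd e
    rw [← Finset.sum_subset (Finset.subset_univ ({v, w} : Finset V))] at h0
    · rwa [Finset.sum_pair hvw] at h0
    · intro u _ hu
      simp only [Finset.mem_insert, Finset.mem_singleton, not_or] at hu
      rw [hz u hu.1 hu.2]; simp
  rw [abs_of_pos (by exact_mod_cast hvpos),
    abs_of_neg (show (γ e w : ℚ) < 0 by exact_mod_cast hwneg)]
  linarith

/-- The basic edge relation for a kernel element. -/
lemma mq_key (hM : CondM γ) {d : V → ℚ}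
    (hd : ∀ e : E, ∑ u : V, (γ e u : ℚ) * d u = 0)
    {e : E} {v w : V} (hv : γ e v ≠ 0) (hw : γ e w ≠ 0) (hvw : v ≠ w) :
    |(γ e v : ℚ)| * d v = |(γ e w : ℚ)| * d w := by
  rcases lt_or_gt_of_ne hv with hv' | hv' <;> rcases lt_or_gt_of_ne hw with hw' | hw'
  · exact absurd ((hM e).2 v w hv' hw') hvw
  · exact (mq_key' hM hd hw' hv').symm
  · exact mq_key' hM hd hv' hw'
  · exact absurd ((hM e).1 v w hv' hw') hvw

lemma mq_prop (hM : CondM γ) {d : V → ℚ}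
    (hd : ∀ e : E, ∑ u : V, (γ e u : ℚ) * d u = 0)
    {v w : V} (hadj : MQAdj γ v w) (h0 : d v = 0) : d w = 0 := by
  obtain ⟨hvw, e, hv, hw⟩ := hadj
  have := mq_key hM hd hv hw hvw
  rw [h0, mul_zero] at this
  have habs : |(γ e w : ℚ)| ≠ 0 := by
    simp only [ne_eq, abs_eq_zero, Int.cast_eq_zero]
    exact hw
  exact (mul_eq_zero.mp this.symm).resolve_left habs

end Aux

/-- If `Γ` is connected and contains a non-balanced cycle, then `ker γ = {0}`. -/
theorem kerGamma_eq_bot_of_unbalanced_cycle {V E : Type*} [Fintype V] [Fintype E]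
    (γ : E → V → ℤ) (hM : CondM γ) (hconn : MQConnected γ)
    (hcyc : ∃ c : MQCycle γ, ¬ c.Balanced) :
    kerGamma γ = ⊥ := by
  obtain ⟨c, hcb⟩ := hcyc
  haveI : NeZero c.n := ⟨by have := c.hn; omega⟩
  rw [eq_bot_iff]
  intro d hd
  have hd' : ∀ e : E, ∑ u : V, (γ e u : ℚ) * d u = 0 := hd
  -- the edge relations along the cycle
  have hrel : ∀ i : ZMod c.n,
      |(γ (c.e i) (c.v i) : ℚ)| * d (c.v i)
        = |(γ (c.e i) (c.v (i + 1)) : ℚ)| * d (c.v (i + 1)) := by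
    intro i
    have hne : c.v i ≠ c.v (i + 1) := by
      intro h
      have := c.hv h
      have h1 : (1 : ZMod c.n) ≠ 0 := by
        haveI : Fact (1 < c.n) := ⟨by have := c.hn; omega⟩
        exact one_ne_zero
      simp only [left_eq_add] at this
      exact h1 this
    exact mq_key hM hd' (c.h1 i) (c.h2 i) hne
  -- multiply the relations together
  have hprod : (∏ i : ZMod c.n, |(γ (c.e i) (c.v i) : ℚ)|) * ∏ i : ZMod c.n, d (c.v i)
      = (∏ i : ZMod c.n, |(γ (c.e i) (c.v (i + 1)) : ℚ)|) * ∏ i : ZMod c.n, d (c.v i) := by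
    have hshift : (∏ i : ZMod c.n, d (c.v (i + 1))) = ∏ i : ZMod c.n, d (c.v i) :=
      Fintype.prod_equiv (Equiv.addRight (1 : ZMod c.n)) _ _ (fun i => rfl)
    calc (∏ i : ZMod c.n, |(γ (c.e i) (c.v i) : ℚ)|) * ∏ i : ZMod c.n, d (c.v i)
        = ∏ i : ZMod c.n, (|(γ (c.e i) (c.v i) : ℚ)| * d (c.v i)) := by
          rw [Finset.prod_mul_distrib]
      _ = ∏ i : ZMod c.n, (|(γ (c.e i) (c.v (i + 1)) : ℚ)| * d (c.v (i + 1))) :=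
          Finset.prod_congr rfl fun i _ => hrel i
      _ = (∏ i : ZMod c.n, |(γ (c.e i) (c.v (i + 1)) : ℚ)|) * ∏ i : ZMod c.n, d (c.v (i + 1)) := by
          rw [Finset.prod_mul_distrib]
      _ = _ := by rw [hshift]
  -- the products of absolute values differ, hence the product of values is zero
  have hA : (∏ i : ZMod c.n, |(γ (c.e i) (c.v i) : ℚ)|)
      ≠ ∏ i : ZMod c.n, |(γ (c.e i) (c.v (i + 1)) : ℚ)| := by
    intro h
    apply hcb
    have h1 : ((∏ i : ZMod c.n, (γ (c.e i) (c.v i)).natAbs : ℕ) : ℚ)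
        = ((∏ i : ZMod c.n, (γ (c.e i) (c.v (i + 1))).natAbs : ℕ) : ℚ) := by
      push_cast [Nat.cast_natAbs]
      exact h
    exact_mod_cast h1
  have hP : ∏ i : ZMod c.n, d (c.v i) = 0 := by
    by_contra hP
    exact hA (mul_right_cancel₀ hP hprod)
  obtain ⟨i0, _, hi0⟩ := Finset.prod_eq_zero_iff.mp hP
  -- propagate the zero through the connected graph
  show d = 0
  funext w
  have hpath := hconn (c.v i0) w
  simp only [Pi.zero_apply]
  induction hpath with
  | refl => exact hi0
  | tail _ hadj ih => exact mq_prop hM hd' hadj ih
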